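/- Under the EQUI policy, if a job t makes a better response move from machine a to machine b decreasing its cost from c_t to c'_t, then the potential Φ(σ) = (1/2)Σ_i (c_i + p_{i,σ(i)}) changes by exactly c'_t − c_t; in particular Φ strictly decreases, so the game is an exact potential game. -/
import Mathlib


/-- EQUI cost of job `i` in profile `σ` on unrelated machines:
`c_i = Σ_{i' : σ i' = σ i} min(p_{i,σ i}, p_{i',σ i})`. -/
def equiCost {n m : ℕ} (p : Fin n → Fin m → ℝ) (σ : Fin n → Fin m) (i : Fin n) : ℝ :=
  ∑ i' ∈ Finset.univ.filter (fun i' => σ i' = σ i), min (p i (σ i)) (p i' (σ i))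

/-- The potential `Φ(σ) = (1/2) Σ_i (c_i + p_{i,σ(i)})`. -/
noncomputable def equiPot {n m : ℕ} (p : Fin n → Fin m → ℝ) (σ : Fin n → Fin m) : ℝ :=
  (1 / 2) * ∑ i, (equiCost p σ i + p i (σ i))

/-- Under EQUI, if job `t` makes a better response move from its machine
to machine `b`, decreasing its cost from `c_t` to `c'_t`, then the potential changes by
exactly `c'_t − c_t`; in particular it strictly decreases (exact potential game). -/
theorem equi_exact_potential
    {n m : ℕ} (p : Fin n → Fin m → ℝ) (hp : ∀ i j, 0 < p i j)
    (σ : Fin n → Fin m) (t : Fin n) (b : Fin m) (hb : b ≠ σ t)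
    (himp : equiCost p (Function.update σ t b) t < equiCost p σ t) :
    equiPot p (Function.update σ t b) - equiPot p σ =
      equiCost p (Function.update σ t b) t - equiCost p σ t ∧
    equiPot p (Function.update σ t b) < equiPot p σ := by
  classical
  set σ' := Function.update σ t b with hσ'def
  have hσ't : σ' t = b := Function.update_self t b σ
  have hσ'i : ∀ i : Fin n, i ≠ t → σ' i = σ i := fun i hi => Function.update_of_ne hi b σ
  set a := σ t with ha
  set m' : Fin n → ℝ := fun i => min (p i (σ i)) (p t (σ i)) with hm'
  have hc : ∀ (τ : Fin n → Fin m) (i : Fin n),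
      equiCost p τ i = ∑ i', if τ i' = τ i then min (p i (τ i)) (p i' (τ i)) else 0 := by
    intro τ i
    exact Finset.sum_filter _ _
  -- step lemma for i ≠ t
  have step : ∀ i ∈ Finset.univ.erase t,
      equiCost p σ' i + (if a = σ i then m' i else 0)
        = equiCost p σ i + (if b = σ i then m' i else 0) := by
    intro i hi
    have hit : i ≠ t := (Finset.mem_erase.mp hi).1
    have hσi : σ' i = σ i := hσ'i i hit
    rw [hc σ' i, hc σ i, hσi]
    rw [← Finset.sum_erase_add _ _ (Finset.mem_univ t),
        ← Finset.sum_erase_add _ _ (Finset.mem_univ t)]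
    have hsame : ∑ i' ∈ Finset.univ.erase t,
        (if σ' i' = σ i then min (p i (σ i)) (p i' (σ i)) else 0)
        = ∑ i' ∈ Finset.univ.erase t,
        (if σ i' = σ i then min (p i (σ i)) (p i' (σ i)) else 0) := by
      refine Finset.sum_congr rfl ?_
      intro i' hi'
      rw [hσ'i i' (Finset.mem_erase.mp hi').1]
    rw [hsame, hσ't]
    have : (if a = σ i then m' i else 0) = (if σ t = σ i then min (p i (σ i)) (p t (σ i)) else 0) := by
      simp [m', ha]
    rw [this]
    have : (if b = σ i then m' i else 0) = (if b = σ i then min (p i (σ i)) (p t (σ i)) else 0) := by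
      simp [m']
    rw [this]
    ring
  have hsumstep := Finset.sum_congr rfl step
  rw [Finset.sum_add_distrib, Finset.sum_add_distrib] at hsumstep
  -- identify the two auxiliary sums
  have hA : ∑ i ∈ Finset.univ.erase t, (if a = σ i then m' i else 0)
      = equiCost p σ t - p t a := by
    have : equiCost p σ t
        = (∑ i ∈ Finset.univ.erase t, if σ i = σ t then min (p t a) (p i a) else 0)
          + (if σ t = σ t then min (p t a) (p t a) else 0) := by
      rw [hc σ t, ← Finset.sum_erase_add _ _ (Finset.mem_univ t), ha]
    rw [if_pos rfl, min_self] at this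
    have heq : ∑ i ∈ Finset.univ.erase t, (if a = σ i then m' i else 0)
        = ∑ i ∈ Finset.univ.erase t, (if σ i = σ t then min (p t a) (p i a) else 0) := by
      refine Finset.sum_congr rfl ?_
      intro i _
      by_cases h : σ i = σ t
      · rw [if_pos h, if_pos h.symm]
        simp [m', h, ha, min_comm]
      · rw [if_neg h, if_neg (fun hh => h (by rw [← hh, ha]))]
    rw [heq]
    linarith [this]
  have hB : ∑ i ∈ Finset.univ.erase t, (if b = σ i then m' i else 0)
      = equiCost p σ' t - p t b := by
    have : equiCost p σ' t
        = (∑ i ∈ Finset.univ.erase t, if σ' i = b then min (p t b) (p i b) else 0)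
          + (if σ' t = b then min (p t b) (p t b) else 0) := by
      rw [hc σ' t, ← Finset.sum_erase_add _ _ (Finset.mem_univ t), hσ't]
    rw [if_pos hσ't, min_self] at this
    have heq : ∑ i ∈ Finset.univ.erase t, (if b = σ i then m' i else 0)
        = ∑ i ∈ Finset.univ.erase t, (if σ' i = b then min (p t b) (p i b) else 0) := by
      refine Finset.sum_congr rfl ?_
      intro i hi
      have hit : i ≠ t := (Finset.mem_erase.mp hi).1
      rw [hσ'i i hit]
      by_cases h : σ i = b
      · rw [if_pos h.symm, if_pos h]
        simp [m', h, min_comm]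
      · rw [if_neg (fun hh => h hh.symm), if_neg h]
    rw [heq]
    linarith [this]
  -- total sums
  have split' : ∑ i, (equiCost p σ' i + p i (σ' i))
      = (∑ i ∈ Finset.univ.erase t, (equiCost p σ' i + p i (σ i)))
        + (equiCost p σ' t + p t b) := by
    rw [← Finset.sum_erase_add _ _ (Finset.mem_univ t), hσ't]
    congr 1
    refine Finset.sum_congr rfl ?_
    intro i hi
    rw [hσ'i i (Finset.mem_erase.mp hi).1]
  have split : ∑ i, (equiCost p σ i + p i (σ i))
      = (∑ i ∈ Finset.univ.erase t, (equiCost p σ i + p i (σ i)))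
        + (equiCost p σ t + p t a) := by
    rw [← Finset.sum_erase_add _ _ (Finset.mem_univ t), ha]
  have d1 : ∑ i ∈ Finset.univ.erase t, (equiCost p σ' i + p i (σ i))
      = (∑ i ∈ Finset.univ.erase t, equiCost p σ' i)
        + ∑ i ∈ Finset.univ.erase t, p i (σ i) := Finset.sum_add_distrib
  have d2 : ∑ i ∈ Finset.univ.erase t, (equiCost p σ i + p i (σ i))
      = (∑ i ∈ Finset.univ.erase t, equiCost p σ i)
        + ∑ i ∈ Finset.univ.erase t, p i (σ i) := Finset.sum_add_distrib
  have key : ∑ i, (equiCost p σ' i + p i (σ' i)) - ∑ i, (equiCost p σ i + p i (σ i))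
      = 2 * (equiCost p σ' t - equiCost p σ t) := by
    rw [split, split', d1, d2]
    linarith [hsumstep, hA, hB]
  have hpot : equiPot p σ' - equiPot p σ = equiCost p σ' t - equiCost p σ t := by
    unfold equiPot
    linarith [key]
  exact ⟨hpot, by linarith [hpot, himp]⟩
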